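/- For p = 1/2 and any ε ∈ (0, 1/2), the binary KL divergence satisfies 2ε² ≤ T(1/2 + ε, 1/2) ≤ 2ε² + 16ε⁴ / (3(1 - 4ε²)²). -/

import Mathlib

lemma le_of_deriv_nonneg' {f f' : ℝ → ℝ} {a b : ℝ} (hab : a ≤ b)
    (hd : ∀ t ∈ Set.Icc a b, HasDerivAt f (f' t) t)
    (hpos : ∀ t ∈ Set.Icc a b, 0 ≤ f' t) : f a ≤ f b := by
  have hmono : MonotoneOn f (Set.Icc a b) := by
    apply monotoneOn_of_deriv_nonneg (convex_Icc a b)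
      (fun t ht => (hd t ht).continuousAt.continuousWithinAt)
      (fun t ht => (hd t (interior_subset ht)).differentiableAt.differentiableWithinAt)
    intro t ht
    rw [(hd t (interior_subset ht)).deriv]
    exact hpos t (interior_subset ht)
  exact hmono (Set.left_mem_Icc.mpr hab) (Set.right_mem_Icc.mpr hab) hab

lemma aux1 (x : ℝ) (hx0 : 0 ≤ x) (hx1 : x < 1) :
    2 * x ≤ Real.log (1 + x) - Real.log (1 - x) := by
  have h := le_of_deriv_nonneg' (f := fun t => Real.log (1 + t) - Real.log (1 - t) - 2 * t)
    (f' := fun t => 2 * t ^ 2 / ((1 + t) * (1 - t))) (a := 0) (b := x) hx0 ?_ ?_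
  · simp at h; linarith
  · intro t ht
    obtain ⟨ht0, ht1⟩ := ht
    have hp : (0:ℝ) < 1 + t := by linarith
    have hm : (0:ℝ) < 1 - t := by linarith
    have d1 : HasDerivAt (fun t : ℝ => Real.log (1 + t)) (1 / (1 + t)) t :=
      ((hasDerivAt_id t).const_add 1).log hp.ne'
    have d2 : HasDerivAt (fun t : ℝ => Real.log (1 - t)) ((-1) / (1 - t)) t :=
      ((hasDerivAt_id t).const_sub 1).log hm.ne'
    have d3 : HasDerivAt (fun t : ℝ => 2 * t) 2 t := by
      simpa using (hasDerivAt_id t).const_mul (2:ℝ)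
    have := (d1.sub d2).sub d3
    refine this.congr_deriv ?_
    field_simp
    ring
  · intro t ht
    obtain ⟨ht0, ht1⟩ := ht
    have hp : (0:ℝ) < 1 + t := by linarith
    have hm : (0:ℝ) < 1 - t := by linarith
    positivity

lemma aux2 (x : ℝ) (hx0 : 0 ≤ x) (hx1 : x < 1) :
    Real.log (1 + x) - Real.log (1 - x) ≤ 2 * x + (2/3) * x ^ 3 / (1 - x ^ 2) := by
  have h := le_of_deriv_nonneg'
    (f := fun t => 2 * t + (2/3) * t ^ 3 / (1 - t ^ 2) - (Real.log (1 + t) - Real.log (1 - t)))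
    (f' := fun t => (4/3) * t ^ 4 / (1 - t ^ 2) ^ 2) (a := 0) (b := x) hx0 ?_ ?_
  · simp at h; linarith
  · intro t ht
    obtain ⟨ht0, ht1⟩ := ht
    have hp : (0:ℝ) < 1 + t := by linarith
    have hm : (0:ℝ) < 1 - t := by linarith
    have hq : (0:ℝ) < 1 - t ^ 2 := by nlinarith
    have d1 : HasDerivAt (fun t : ℝ => Real.log (1 + t)) (1 / (1 + t)) t :=
      ((hasDerivAt_id t).const_add 1).log hp.ne'
    have d2 : HasDerivAt (fun t : ℝ => Real.log (1 - t)) ((-1) / (1 - t)) t :=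
      ((hasDerivAt_id t).const_sub 1).log hm.ne'
    have d3 : HasDerivAt (fun t : ℝ => 2 * t) 2 t := by
      simpa using (hasDerivAt_id t).const_mul (2:ℝ)
    have dnum : HasDerivAt (fun t : ℝ => (2/3) * t ^ 3) ((2/3) * (3 * t ^ 2)) t := by
      simpa using (hasDerivAt_pow 3 t).const_mul (2/3 : ℝ)
    have dden : HasDerivAt (fun t : ℝ => 1 - t ^ 2) (-(2 * t)) t := by
      simpa using ((hasDerivAt_pow 2 t).const_sub 1)
    have d4 := dnum.div dden hq.ne'
    have := (d3.add d4).sub (d1.sub d2)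
    refine this.congr_deriv ?_
    field_simp
    ring
  · intro t ht
    obtain ⟨ht0, ht1⟩ := ht
    have hq : (0:ℝ) < 1 - t ^ 2 := by nlinarith
    positivity

theorem kl_half_quadratic_bounds (ε : ℝ) (h1 : 0 < ε) (h2 : ε < 1 / 2) :
    2 * ε ^ 2 ≤
      (1 / 2 + ε) * Real.log ((1 / 2 + ε) / (1 / 2)) +
        (1 / 2 - ε) * Real.log ((1 / 2 - ε) / (1 / 2)) ∧
    (1 / 2 + ε) * Real.log ((1 / 2 + ε) / (1 / 2)) +
        (1 / 2 - ε) * Real.log ((1 / 2 - ε) / (1 / 2)) ≤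
      2 * ε ^ 2 + 16 * ε ^ 4 / (3 * (1 - 4 * ε ^ 2) ^ 2) := by
  have e1 : (1 / 2 + ε) / (1 / 2) = 1 + 2 * ε := by ring
  have e2 : (1 / 2 - ε) / (1 / 2) = 1 - 2 * ε := by ring
  rw [e1, e2]
  have hderivT : ∀ t ∈ Set.Icc 0 ε,
      HasDerivAt (fun t : ℝ => (1/2 + t) * Real.log (1 + 2*t) + (1/2 - t) * Real.log (1 - 2*t))
        (Real.log (1 + 2*t) - Real.log (1 - 2*t)) t := by
    intro t ht
    obtain ⟨ht0, ht1⟩ := ht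
    have hp : (0:ℝ) < 1 + 2*t := by linarith
    have hm : (0:ℝ) < 1 - 2*t := by linarith
    have l1 : HasDerivAt (fun t : ℝ => Real.log (1 + 2*t)) (2 / (1 + 2*t)) t := by
      simpa using (((hasDerivAt_id t).const_mul 2).const_add 1).log hp.ne'
    have l2 : HasDerivAt (fun t : ℝ => Real.log (1 - 2*t)) ((-2) / (1 - 2*t)) t := by
      simpa using (((hasDerivAt_id t).const_mul 2).const_sub 1).log hm.ne'
    have a1 : HasDerivAt (fun t : ℝ => (1/2 + t)) 1 t := (hasDerivAt_id t).const_add (1/2)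
    have a2 : HasDerivAt (fun t : ℝ => (1/2 - t)) (-1) t := (hasDerivAt_id t).const_sub (1/2)
    have := (a1.mul l1).add (a2.mul l2)
    refine this.congr_deriv ?_
    field_simp
    ring
  constructor
  · have h := le_of_deriv_nonneg'
      (f := fun t => (1/2 + t) * Real.log (1 + 2*t) + (1/2 - t) * Real.log (1 - 2*t) - 2 * t ^ 2)
      (f' := fun t => Real.log (1 + 2*t) - Real.log (1 - 2*t) - 4 * t) (a := 0) (b := ε) h1.le ?_ ?_
    · simp at h; linarith
    · intro t ht
      have d5 : HasDerivAt (fun t : ℝ => 2 * t ^ 2) (4 * t) t := by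
        have := (hasDerivAt_pow 2 t).const_mul (2:ℝ)
        refine this.congr_deriv ?_; norm_num; ring
      exact (hderivT t ht).sub d5
    · intro t ht
      obtain ⟨ht0, ht1⟩ := ht
      have := aux1 (2*t) (by linarith) (by linarith)
      show 0 ≤ Real.log (1 + 2*t) - Real.log (1 - 2*t) - 4 * t
      linarith
  · have h := le_of_deriv_nonneg'
      (f := fun t => 2 * t ^ 2 + 16 * t ^ 4 / (3 * (1 - 4 * t ^ 2) ^ 2)
        - ((1/2 + t) * Real.log (1 + 2*t) + (1/2 - t) * Real.log (1 - 2*t)))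
      (f' := fun t => 4 * t + 64 * t ^ 3 / (3 * (1 - 4 * t ^ 2) ^ 3)
        - (Real.log (1 + 2*t) - Real.log (1 - 2*t))) (a := 0) (b := ε) h1.le ?_ ?_
    · simp at h; linarith
    · intro t ht
      obtain ⟨ht0, ht1⟩ := ht
      have hq : (0:ℝ) < 1 - 4 * t ^ 2 := by nlinarith
      have d5 : HasDerivAt (fun t : ℝ => 2 * t ^ 2) (4 * t) t := by
        have := (hasDerivAt_pow 2 t).const_mul (2:ℝ)
        refine this.congr_deriv ?_; norm_num; ring
      have dnum : HasDerivAt (fun t : ℝ => 16 * t ^ 4) (16 * (4 * t ^ 3)) t := by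
        simpa using (hasDerivAt_pow 4 t).const_mul (16:ℝ)
      have dinner : HasDerivAt (fun t : ℝ => 1 - 4 * t ^ 2) (-(4 * (2 * t))) t := by
        simpa using ((hasDerivAt_pow 2 t).const_mul (4:ℝ)).const_sub 1
      have dden : HasDerivAt (fun t : ℝ => 3 * (1 - 4 * t ^ 2) ^ 2)
          (3 * (2 * (1 - 4 * t ^ 2) ^ 1 * (-(4 * (2 * t))))) t :=
        (dinner.pow 2).const_mul 3
      have hden : 3 * (1 - 4 * t ^ 2) ^ 2 ≠ 0 := by positivity
      have d6 := dnum.div dden hden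
      have := (d5.add d6).sub (hderivT t ⟨ht0, ht1⟩)
      refine this.congr_deriv ?_
      field_simp
      ring
    · intro t ht
      obtain ⟨ht0, ht1⟩ := ht
      have hq : (0:ℝ) < 1 - 4 * t ^ 2 := by nlinarith
      have hb := aux2 (2*t) (by linarith) (by linarith)
      have e3 : (2/3) * (2*t) ^ 3 / (1 - (2*t) ^ 2) = 16 * t ^ 3 / (3 * (1 - 4 * t ^ 2)) := by
        rw [div_eq_div_iff (by nlinarith) (by positivity)]; ring
      have key : 16 * t ^ 3 / (3 * (1 - 4 * t ^ 2)) ≤ 64 * t ^ 3 / (3 * (1 - 4 * t ^ 2) ^ 3) := by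
        rw [div_le_div_iff₀ (by positivity) (by positivity)]
        have h4 : (0:ℝ) ≤ 4 - (1 - 4*t^2)^2 := by nlinarith
        nlinarith [mul_nonneg (mul_nonneg (pow_nonneg ht0 3) hq.le) h4]
      rw [e3] at hb
      show 0 ≤ 4 * t + 64 * t ^ 3 / (3 * (1 - 4 * t ^ 2) ^ 3) - (Real.log (1 + 2*t) - Real.log (1 - 2*t))
      linarith
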